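/- Given staircase data, let {f₀,…,f_{r−1}} = A ⊔ B be a partition of the first r staircase generators with f_{r−1} ∈ A. Then adjoining the last generator f_r = H₁⋯H_{t_r} to A does not change the intersection: Ideal.span (A ∪ {f_r}) ⊓ Ideal.span B = Ideal.span A ⊓ Ideal.span B. -/

import Mathlib

/- Common setup: R = ℂ[x₀,x₁,y₀,y₁] as MvPolynomial (Fin 4) ℂ with
   x₀ = X 0, x₁ = X 1, y₀ = X 2, y₁ = X 3.
   `Hf a` is the horizontal form a₁x₀ - a₀x₁ of the point a = [a₀:a₁] ∈ ℙ¹;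
   `Vf b` is the vertical form b₁y₀ - b₀y₁;
   `cross a b ≠ 0` says the (nonzero) pairs a, b are non-proportional,
   i.e. define distinct points of ℙ¹. -/

open MvPolynomial

noncomputable section

abbrev R : Type := MvPolynomial (Fin 4) ℂ

def Hf (a : ℂ × ℂ) : R := C a.2 * X 0 - C a.1 * X 1

def Vf (b : ℂ × ℂ) : R := C b.2 * X 2 - C b.1 * X 3

def cross (a b : ℂ × ℂ) : ℂ := a.1 * b.2 - a.2 * b.1

/-- The defining ideal of the point P = A×B of ℙ¹×ℙ¹. -/
def Ipt (P : (ℂ × ℂ) × (ℂ × ℂ)) : Ideal R := Ideal.span {Hf P.1, Vf P.2}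

/-- The defining ideal of a finite set of points (I_∅ = R = ⊤). -/
def Ipts (X : Finset ((ℂ × ℂ) × (ℂ × ℂ))) : Ideal R := X.inf Ipt

/-- The defining ideal of a set of points (I_∅ = R = ⊤). -/
def IptsSet (W : Set ((ℂ × ℂ) × (ℂ × ℂ))) : Ideal R := ⨅ P ∈ W, Ipt P

/-- Bihomogeneous: homogeneous separately in x₀,x₁ and in y₀,y₁. -/
def Bihom (f : R) : Prop :=
  ∃ a b : ℕ, IsWeightedHomogeneous (![1,1,0,0] : Fin 4 → ℕ) f a ∧
    IsWeightedHomogeneous (![0,0,1,1] : Fin 4 → ℕ) f b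

/-- `G` minimally generates `I`. -/
def MinGen (G : Finset R) (I : Ideal R) : Prop :=
  Ideal.span (G : Set R) = I ∧ ∀ g ∈ G, Ideal.span ((G : Set R) \ {g}) ≠ I

/-- Staircase data: r ≥ 1, 0 = t₀ < t₁ < ⋯ < t_r, 0 = s₀ < s₁ < ⋯ < s_r,
    pairwise distinct points A₁,…,A_{t_r} of ℙ¹ and pairwise distinct points
    B₁,…,B_{s_r} of ℙ¹ (all indexed starting at 1). -/
structure Staircase where
  r : ℕ
  t : ℕ → ℕ
  s : ℕ → ℕ
  A : ℕ → ℂ × ℂ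
  B : ℕ → ℂ × ℂ
  hr : 1 ≤ r
  ht0 : t 0 = 0
  hs0 : s 0 = 0
  ht : ∀ k, k < r → t k < t (k + 1)
  hs : ∀ k, k < r → s k < s (k + 1)
  hA0 : ∀ i ∈ Finset.Icc 1 (t r), A i ≠ 0
  hB0 : ∀ j ∈ Finset.Icc 1 (s r), B j ≠ 0
  hAd : ∀ i ∈ Finset.Icc 1 (t r), ∀ i' ∈ Finset.Icc 1 (t r), i ≠ i' → cross (A i) (A i') ≠ 0
  hBd : ∀ j ∈ Finset.Icc 1 (s r), ∀ j' ∈ Finset.Icc 1 (s r), j ≠ j' → cross (B j) (B j') ≠ 0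

/-- The staircase generator f_k = H₁⋯H_{t_k} · V₁⋯V_{s_{r-k}}. -/
def stairGen (S : Staircase) (k : ℕ) : R :=
  (∏ i ∈ Finset.Icc 1 (S.t k), Hf (S.A i)) * ∏ j ∈ Finset.Icc 1 (S.s (S.r - k)), Vf (S.B j)

/- Put `V := V₁⋯V_{s₁}`, the vertical part of `f_{r-1}`. Every `f_k` with `k < r` is divisible by
`V`, while `f_r = H₁⋯H_{t_r}` is coprime to it, each `Vⱼ` being an irreducible linear form that
divides no `Hᵢ`. So if `c f_r + a` lies in `(B)` with `a ∈ (A)`, then `V ∣ c f_r`, whence `V ∣ c`,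
and `c f_r` is a multiple of `V f_r`, which is a multiple of `f_{r-1} ∈ A`. -/

theorem Ideal.span_singleton_sup_inf_eq_of_isRelPrime {A : Type*} [CommRing A]
    [DecompositionMonoid A] {I J : Ideal A} {v f : A} (hI : I ≤ Ideal.span {v})
    (hJ : J ≤ Ideal.span {v}) (hvf : v * f ∈ I) (hcop : IsRelPrime v f) :
    (Ideal.span {f} ⊔ I) ⊓ J = I ⊓ J := by
  refine le_antisymm (fun x hx => ?_) (inf_le_inf_right _ le_sup_right)
  obtain ⟨hxfI, hxJ⟩ := Submodule.mem_inf.1 hx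
  obtain ⟨y, hy, z, hz, rfl⟩ := Submodule.mem_sup.1 hxfI
  obtain ⟨c, rfl⟩ := Ideal.mem_span_singleton'.1 hy
  have hvc : v ∣ c * f := by
    simpa using dvd_sub (Ideal.mem_span_singleton.1 (hJ hxJ))
      (Ideal.mem_span_singleton.1 (hI hz))
  obtain ⟨d, rfl⟩ := hcop.dvd_of_dvd_mul_right hvc
  refine ⟨I.add_mem ?_ hz, hxJ⟩
  rw [mul_comm v d, mul_assoc]
  exact I.mul_mem_left d hvf

namespace MvPolynomial

theorem irreducible_of_totalDegree_eq_one_of_field {σ K : Type*} [Field K]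
    {p : MvPolynomial σ K} (hp : p.totalDegree = 1) : Irreducible p := by
  refine irreducible_of_totalDegree_eq_one hp fun x hx => isUnit_iff_ne_zero.2 ?_
  rintro rfl
  have : p = 0 := MvPolynomial.ext _ _ fun m => zero_dvd_iff.1 (hx m)
  simp [this] at hp

theorem totalDegree_C_mul_X_sub_C_mul_X {σ K : Type*} [Field K] {i j : σ}
    (hij : i ≠ j) {p q : K} (hpq : p ≠ 0 ∨ q ≠ 0) :
    (C p * X i - C q * X j : MvPolynomial σ K).totalDegree = 1 := by
  classical
  refine le_antisymm ?_ (Nat.one_le_iff_ne_zero.2 fun h0 => ?_)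
  · refine (totalDegree_sub _ _).trans (max_le ?_ ?_) <;>
      exact (totalDegree_mul _ _).trans (by simp)
  · have hc := totalDegree_eq_zero_iff_eq_C.1 h0
    have hi := congrArg (coeff (Finsupp.single i 1)) hc
    have hj := congrArg (coeff (Finsupp.single j 1)) hc
    simp [coeff_X, Finsupp.single_left_inj, hij, hij.symm] at hi hj
    tauto

end MvPolynomial

theorem irreducible_Vf {b : ℂ × ℂ} (hb : b ≠ 0) : Irreducible (Vf b) := by
  refine irreducible_of_totalDegree_eq_one_of_field
    (totalDegree_C_mul_X_sub_C_mul_X (by decide) ?_)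
  by_contra! h
  exact hb (Prod.ext h.2 h.1)

theorem not_Vf_dvd_Hf {a : ℂ × ℂ} (b : ℂ × ℂ) (ha : a ≠ 0) : ¬ Vf b ∣ Hf a := by
  rintro ⟨g, hg⟩
  have key : ∀ x₀ x₁ : ℂ, a.2 * x₀ - a.1 * x₁ = 0 := fun x₀ x₁ => by
    simpa [Hf, Vf, mul_comm] using congrArg (eval ![x₀, x₁, b.1, b.2]) hg
  exact ha (Prod.ext (by simpa using key 0 (-1)) (by simpa using key 1 0))

namespace Staircase

variable (S : Staircase)

def hprod (m : ℕ) : R := ∏ i ∈ Finset.Icc 1 m, Hf (S.A i)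

def vprod (n : ℕ) : R := ∏ j ∈ Finset.Icc 1 n, Vf (S.B j)

theorem hprod_dvd_hprod {m m' : ℕ} (h : m ≤ m') : S.hprod m ∣ S.hprod m' :=
  Finset.prod_dvd_prod_of_subset _ _ _ (Finset.Icc_subset_Icc_right h)

theorem vprod_dvd_vprod {n n' : ℕ} (h : n ≤ n') : S.vprod n ∣ S.vprod n' :=
  Finset.prod_dvd_prod_of_subset _ _ _ (Finset.Icc_subset_Icc_right h)

theorem s_one_le {n : ℕ} (h1 : 1 ≤ n) (hn : n ≤ S.r) : S.s 1 ≤ S.s n :=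
  (strictMonoOn_Iic_of_lt_succ S.hs).monotoneOn (by simpa using S.hr) (by simpa using hn) h1

theorem isRelPrime_vprod_hprod {n m : ℕ} (hn : n ≤ S.s S.r) (hm : m ≤ S.t S.r) :
    IsRelPrime (S.vprod n) (S.hprod m) :=
  IsRelPrime.prod_left fun j hj => IsRelPrime.prod_right fun i hi =>
    (irreducible_Vf (S.hB0 j (Finset.Icc_subset_Icc_right hn hj))).isRelPrime_iff_not_dvd.2
      (not_Vf_dvd_Hf _ (S.hA0 i (Finset.Icc_subset_Icc_right hm hi)))

theorem stairGen_eq (k : ℕ) : stairGen S k = S.hprod (S.t k) * S.vprod (S.s (S.r - k)) := rfl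

theorem stairGen_r_eq_hprod : stairGen S S.r = S.hprod (S.t S.r) := by
  simp [stairGen_eq, S.hs0, vprod]

theorem vprod_dvd_stairGen {k : ℕ} (hk : k < S.r) : S.vprod (S.s 1) ∣ stairGen S k :=
  (S.vprod_dvd_vprod (S.s_one_le (by omega) (Nat.sub_le _ _))).mul_left _

theorem stairGen_pred_dvd : stairGen S (S.r - 1) ∣ S.vprod (S.s 1) * stairGen S S.r := by
  rw [stairGen_eq, stairGen_r_eq_hprod, Nat.sub_sub_self S.hr, mul_comm (S.vprod _)]
  have ht := S.ht (S.r - 1) (by have := S.hr; omega)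
  rw [Nat.sub_add_cancel S.hr] at ht
  exact mul_dvd_mul_right (S.hprod_dvd_hprod ht.le) _

theorem span_stairGen_le {K : Set ℕ} (hK : ∀ k ∈ K, k < S.r) :
    Ideal.span (stairGen S '' K) ≤ Ideal.span {S.vprod (S.s 1)} := by
  rw [Ideal.span_le]
  rintro _ ⟨k, hk, rfl⟩
  exact Ideal.mem_span_singleton.2 (S.vprod_dvd_stairGen (hK k hk))

end Staircase

theorem statement14_general (S : Staircase) (KA KB : Finset ℕ)
    (hUnion : KA ∪ KB = Finset.range S.r)
    (hlast : S.r - 1 ∈ KA) :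
    Ideal.span (insert (stairGen S S.r) (stairGen S '' ↑KA)) ⊓
        Ideal.span (stairGen S '' ↑KB) =
      Ideal.span (stairGen S '' ↑KA) ⊓ Ideal.span (stairGen S '' ↑KB) := by
  have hlt : ∀ k ∈ KA ∪ KB, k < S.r := by simp [hUnion]
  rw [Ideal.span_insert]
  refine Ideal.span_singleton_sup_inf_eq_of_isRelPrime
    (S.span_stairGen_le fun k hk => hlt k (Finset.mem_union_left _ hk))
    (S.span_stairGen_le fun k hk => hlt k (Finset.mem_union_right _ hk)) ?_ ?_
  · obtain ⟨g, hg⟩ := S.stairGen_pred_dvd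
    rw [hg]
    exact Ideal.mul_mem_right _ _ (Ideal.subset_span ⟨_, hlast, rfl⟩)
  · rw [S.stairGen_r_eq_hprod]
    exact S.isRelPrime_vprod_hprod (S.s_one_le S.hr le_rfl) le_rfl

/-- (From the proof of Theorem 5.4.) If {f₀,…,f_{r-1}} = A ⊔ B is a partition of the
first r staircase generators (encoded by index sets KA ⊔ KB = {0,…,r-1}) with
f_{r-1} ∈ A, then adjoining f_r = H₁⋯H_{t_r} to A does not change the intersection. -/
theorem statement14 (S : Staircase) (KA KB : Finset ℕ)
    (hUnion : KA ∪ KB = Finset.range S.r) (hDisj : Disjoint KA KB)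
    (hlast : S.r - 1 ∈ KA) :
    Ideal.span (insert (stairGen S S.r) (stairGen S '' ↑KA)) ⊓
        Ideal.span (stairGen S '' ↑KB) =
      Ideal.span (stairGen S '' ↑KA) ⊓ Ideal.span (stairGen S '' ↑KB) :=
  statement14_general S KA KB hUnion hlast
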